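/- arXiv:1108.5585 — 2 statements merged into one kernel-verified Lean document; each statement's English description precedes it below -/
import Mathlib

section
/- For every integer l ≥ 1, the series ∑_{k=0}^∞ c(l,k) converges and its sum equals 4/(l(l+1)(l+2)). -/
open scoped Classical

/-- The constants `c(l,k)`: `c(l,0) = c(0,k) = 0`,
`c(1,k) = (2k²+14k)/((k+1)(k+2)(k+3)(k+4))` for `k ≥ 1`, and for `l > 1`, `k > 0`,
`c(l,k) = c(l,k-1)·(l+k-1)/(2l+k+2) + c(l-1,k)·(l-1)/(2l+k+2)`. -/
noncomputable def c : ℕ → ℕ → ℝ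
  | _, 0 => 0
  | 0, _ => 0
  | 1, k + 1 =>
      (2 * ((k : ℝ) + 1) ^ 2 + 14 * ((k : ℝ) + 1)) /
        (((k : ℝ) + 2) * ((k : ℝ) + 3) * ((k : ℝ) + 4) * ((k : ℝ) + 5))
  | l + 2, k + 1 =>
      c (l + 2) k * ((l : ℝ) + (k : ℝ) + 2) / (2 * (l : ℝ) + (k : ℝ) + 7) +
      c (l + 1) (k + 1) * ((l : ℝ) + 1) / (2 * (l : ℝ) + (k : ℝ) + 7)
termination_by l k => (l, k)

/-!
Multiplying the recurrence by `2l + k + 2` and summing over `k ≤ n` telescopes to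
`(l + n) c(l,n) + (l + 2) ∑_{k ≤ n} c(l,k) = (l - 1) ∑_{k ≤ n} c(l-1,k)`.
Hence the partial sums of row `l` are bounded, so the row is summable, and `(l + n) c(l,n)`
converges; its limit must vanish because `∑ 1/n` diverges. So the row sums satisfy
`S(l) = (l - 1)/(l + 2) · S(l - 1)`, and `S(1) = 2/3` by partial fractions.
-/

open Filter Finset Topology Asymptotics

theorem eq_zero_of_tendsto_natCast_mul_of_summable {f : ℕ → ℝ} {a : ℝ} (hf : Summable f)
    (h : Tendsto (fun n : ℕ => (n : ℝ) * f n) atTop (𝓝 a)) : a = 0 := by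
  by_contra ha
  have hinv : (fun n : ℕ => (n : ℝ)⁻¹) =O[atTop] f := by
    refine (((h.inv₀ ha).isBigO_one ℝ).mul (isBigO_refl f atTop)).congr' ?_ (by simp)
    filter_upwards [h.eventually_ne ha] with n hn
    rw [mul_inv, mul_assoc, inv_mul_cancel₀ (right_ne_zero_of_mul hn), mul_one]
  exact Real.not_summable_natCast_inv (summable_of_isBigO_nat hf hinv)

namespace c

lemma zero_right (l : ℕ) : c l 0 = 0 := by simp [c]

lemma one_succ (k : ℕ) :
    c 1 (k + 1) = (2 * ((k : ℝ) + 1) ^ 2 + 14 * ((k : ℝ) + 1)) /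
      (((k : ℝ) + 2) * ((k : ℝ) + 3) * ((k : ℝ) + 4) * ((k : ℝ) + 5)) := by
  rw [c]

lemma mul_succ_succ (l k : ℕ) :
    (2 * (l : ℝ) + k + 7) * c (l + 2) (k + 1) =
      ((l : ℝ) + k + 2) * c (l + 2) k + ((l : ℝ) + 1) * c (l + 1) (k + 1) := by
  rw [c]
  field_simp

lemma nonneg (l k : ℕ) : 0 ≤ c l k := by
  induction l, k using c.induct with
  | case1 => rw [zero_right]
  | case2 l => cases l <;> simp [c]
  | case3 k => rw [one_succ]; positivity
  | case4 l k => rw [c]; positivity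

lemma sum_range_one (n : ℕ) :
    ∑ k ∈ range (n + 1), c 1 k =
      2 / 3 + 2 / ((n : ℝ) + 2) - 8 / ((n : ℝ) + 3) + 4 / ((n : ℝ) + 4) := by
  induction n with
  | zero => norm_num [zero_right]
  | succ n ih =>
    rw [sum_range_succ, ih, one_succ]
    push_cast
    field_simp
    ring

lemma hasSum_one : HasSum (c 1) (2 / 3) := by
  rw [hasSum_iff_tendsto_nat_of_nonneg (nonneg 1), ← tendsto_add_atTop_iff_nat 1]
  simp only [sum_range_one]
  have hdecay (a b : ℝ) : Tendsto (fun n : ℕ => a / ((n : ℝ) + b)) atTop (𝓝 0) :=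
    tendsto_const_nhds.div_atTop (tendsto_atTop_add_const_right _ b tendsto_natCast_atTop_atTop)
  simpa using ((tendsto_const_nhds.add (hdecay 2 2)).sub (hdecay 8 3)).add (hdecay 4 4)

lemma telescope (l n : ℕ) :
    ((l : ℝ) + 2 + n) * c (l + 2) n + ((l : ℝ) + 4) * ∑ k ∈ range (n + 1), c (l + 2) k =
      ((l : ℝ) + 1) * ∑ k ∈ range (n + 1), c (l + 1) k := by
  induction n with
  | zero => simp [zero_right]
  | succ n ih =>
    rw [sum_range_succ, sum_range_succ (c (l + 1))]
    push_cast
    linear_combination mul_succ_succ l n + ih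

lemma hasSum_succ_succ {l : ℕ} {T : ℝ} (hT : HasSum (c (l + 1)) T) :
    HasSum (c (l + 2)) (((l : ℝ) + 1) / ((l : ℝ) + 4) * T) := by
  have hbound (n : ℕ) : ∑ k ∈ range n, c (l + 2) k ≤ ((l : ℝ) + 1) * T := by
    have hsum_nonneg : 0 ≤ ∑ k ∈ range (n + 1), c (l + 2) k := sum_nonneg fun k _ ↦ nonneg _ k
    have hterm_nonneg : 0 ≤ ((l : ℝ) + 2 + n) * c (l + 2) n := by
      have := nonneg (l + 2) n; positivity
    calc ∑ k ∈ range n, c (l + 2) k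
        ≤ ∑ k ∈ range (n + 1), c (l + 2) k := by
          rw [sum_range_succ]; exact le_add_of_nonneg_right (nonneg (l + 2) n)
      _ ≤ ((l : ℝ) + 4) * ∑ k ∈ range (n + 1), c (l + 2) k :=
          le_mul_of_one_le_left hsum_nonneg (by linarith [l.cast_nonneg (α := ℝ)])
      _ ≤ ((l : ℝ) + 1) * ∑ k ∈ range (n + 1), c (l + 1) k := by
          linarith [telescope l n]
      _ ≤ ((l : ℝ) + 1) * T :=
          mul_le_mul_of_nonneg_left (sum_le_hasSum _ (fun k _ ↦ nonneg _ k) hT) (by positivity)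
  obtain ⟨S, hS⟩ : Summable (c (l + 2)) := summable_of_sum_range_le (nonneg _) hbound
  have hlim : Tendsto (fun n : ℕ => (n : ℝ) * c (l + 2) n) atTop
      (𝓝 (((l : ℝ) + 1) * T - ((l : ℝ) + 4) * S - ((l : ℝ) + 2) * 0)) := by
    have hpartial {f : ℕ → ℝ} {s : ℝ} (hf : HasSum f s) :
        Tendsto (fun n ↦ ∑ k ∈ range (n + 1), f k) atTop (𝓝 s) :=
      hf.tendsto_sum_nat.comp (tendsto_add_atTop_nat 1)
    refine ((((hpartial hT).const_mul _).sub ((hpartial hS).const_mul _)).sub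
      (hS.summable.tendsto_atTop_zero.const_mul _)).congr fun n ↦ ?_
    linear_combination -telescope l n
  have hlim_eq_zero := eq_zero_of_tendsto_natCast_mul_of_summable hS.summable hlim
  convert hS using 1
  field_simp
  linarith

end c

/-- For every integer `l ≥ 1`, the series `∑_{k=0}^∞ c(l,k)` converges with sum
`4/(l(l+1)(l+2))`. -/
theorem row_sum_c :
    ∀ l : ℕ, 1 ≤ l →
      HasSum (fun k : ℕ => c l k)
        (4 / ((l : ℝ) * ((l : ℝ) + 1) * ((l : ℝ) + 2))) := by
  intro l hl
  obtain ⟨l, rfl⟩ := Nat.exists_eq_add_of_le' hl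
  induction l with
  | zero => convert c.hasSum_one using 1; norm_num
  | succ l ih =>
    convert c.hasSum_succ_succ (ih (by omega)) using 1
    push_cast
    field_simp
    ring
end

section
/- The double series ∑_{l=0}^∞ ∑_{k=0}^∞ c(l,k) converges and its sum equals 1. -/
open scoped Classical

/-! Summing the recurrence over `k ≤ n` gives, for the partial row sums `P l n = ∑_{k ≤ n} c l k`,
`(m+4) P (m+2) n + (m+n+2) c (m+2) n = (m+1) P (m+1) n`.
Hence each row is dominated by the previous one and is summable, and `n c (m+2) n` converges;
its limit must vanish, since otherwise `c (m+2) n` would be comparable to `1/n`. So the row sums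
satisfy `S (m+2) = (m+1) S (m+1) / (m+4)`, and from `S 1 = 2/3` (row 1 telescopes) we get
`S (l+1) = 4/((l+1)(l+2)(l+3)) = 2/((l+1)(l+2)) - 2/((l+2)(l+3))`, which telescopes to `1`. -/

open Filter Topology Finset

theorem c_zero_right (l : ℕ) : c l 0 = 0 := by cases l <;> simp [c]

theorem c_zero_left (k : ℕ) : c 0 k = 0 := by cases k <;> simp [c]

theorem c_nonneg (l k : ℕ) : 0 ≤ c l k := by
  fun_induction c l k <;> positivity

theorem hasSum_of_eq_sub_succ {a f : ℕ → ℝ} (ha : ∀ n, 0 ≤ a n)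
    (haf : ∀ n, a n = f n - f (n + 1)) (hf : Tendsto f atTop (𝓝 0)) : HasSum a (f 0) := by
  rw [hasSum_iff_tendsto_nat_of_nonneg ha]
  simp_rw [haf, sum_range_sub']
  simpa using tendsto_const_nhds.sub hf

theorem tendsto_const_div_natCast_add (a b : ℝ) :
    Tendsto (fun n : ℕ => a / ((n : ℝ) + b)) atTop (𝓝 0) :=
  tendsto_const_nhds.div_atTop (tendsto_atTop_add_const_right _ b tendsto_natCast_atTop_atTop)

theorem eq_zero_of_summable_of_tendsto_natCast_mul {f : ℕ → ℝ} {L : ℝ} (hf : Summable f)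
    (h : Tendsto (fun n : ℕ => (n : ℝ) * f n) atTop (𝓝 L)) : L = 0 := by
  by_contra hL
  refine Real.not_summable_natCast_inv (summable_of_isBigO_nat hf ?_)
  have hbdd : (fun n : ℕ => ((n : ℝ) * f n)⁻¹) =O[atTop] (fun _ => (1 : ℝ)) :=
    (h.inv₀ hL).isBigO_one ℝ
  refine (hbdd.mul (Asymptotics.isBigO_refl f atTop)).congr' ?_ (by simp)
  filter_upwards [h.eventually_ne hL] with n hn
  rw [mul_inv, mul_assoc, inv_mul_cancel₀ (right_ne_zero_of_mul hn), mul_one]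

theorem hasSum_c_one : HasSum (fun k => c 1 k) (2 / 3) := by
  set h : ℕ → ℝ := fun n => 8 / ((n : ℝ) + 3) - 2 / ((n : ℝ) + 2) - 4 / ((n : ℝ) + 4) with hh
  have hc : ∀ k, c 1 (k + 1) = h k - h (k + 1) := by
    intro k
    simp only [hh, c]
    push_cast
    field_simp
    ring
  have hlim : Tendsto h atTop (𝓝 0) := by
    simpa using ((tendsto_const_div_natCast_add 8 3).sub
      (tendsto_const_div_natCast_add 2 2)).sub (tendsto_const_div_natCast_add 4 4)
  have h0 : h 0 = 2 / 3 - ∑ k ∈ range 1, c 1 k := by norm_num [hh, c_zero_right]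
  exact (hasSum_nat_add_iff' 1).1 (h0 ▸ hasSum_of_eq_sub_succ (fun k => c_nonneg 1 (k + 1)) hc hlim)

theorem sum_range_c_recurrence (m n : ℕ) :
    ((m : ℝ) + 4) * ∑ k ∈ range (n + 1), c (m + 2) k + ((m : ℝ) + n + 2) * c (m + 2) n =
      ((m : ℝ) + 1) * ∑ k ∈ range (n + 1), c (m + 1) k := by
  induction n with
  | zero => simp [c_zero_right]
  | succ n ih =>
    rw [sum_range_succ, sum_range_succ (c (m + 1)), c]
    have hpos : (2 * (m : ℝ) + n + 7) ≠ 0 := by positivity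
    field_simp
    push_cast
    linear_combination (2 * (m : ℝ) + n + 7) * ih

theorem summable_c_succ_succ {m : ℕ} {S : ℝ} (hS : HasSum (fun k => c (m + 1) k) S) :
    Summable (fun k => c (m + 2) k) := by
  refine summable_of_sum_range_le (c_nonneg _) (c := ((m : ℝ) + 1) * S / ((m : ℝ) + 4)) fun n => ?_
  have hmono : ∑ k ∈ range n, c (m + 2) k ≤ ∑ k ∈ range (n + 1), c (m + 2) k :=
    sum_le_sum_of_subset_of_nonneg (range_subset_range.2 n.le_succ) fun k _ _ => c_nonneg _ k
  have hprev : ∑ k ∈ range (n + 1), c (m + 1) k ≤ S :=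
    sum_le_hasSum _ (fun k _ => c_nonneg _ k) hS
  have hlast : 0 ≤ ((m : ℝ) + n + 2) * c (m + 2) n := mul_nonneg (by positivity) (c_nonneg _ _)
  rw [le_div_iff₀ (by positivity)]
  nlinarith [sum_range_c_recurrence m n]

theorem hasSum_c_succ_succ {m : ℕ} {S : ℝ} (hS : HasSum (fun k => c (m + 1) k) S) :
    HasSum (fun k => c (m + 2) k) (((m : ℝ) + 1) * S / ((m : ℝ) + 4)) := by
  have hsum := summable_c_succ_succ hS
  set T := ∑' k, c (m + 2) k
  have partial_sums {f : ℕ → ℝ} {a : ℝ} (hf : HasSum f a) :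
      Tendsto (fun n => ∑ k ∈ range (n + 1), f k) atTop (𝓝 a) :=
    hf.tendsto_sum_nat.comp (tendsto_add_atTop_nat 1)
  have hlim : Tendsto (fun n : ℕ => (n : ℝ) * c (m + 2) n) atTop
      (𝓝 (((m : ℝ) + 1) * S - ((m : ℝ) + 4) * T)) := by
    have := (((partial_sums hS).const_mul ((m : ℝ) + 1)).sub
      ((partial_sums hsum.hasSum).const_mul ((m : ℝ) + 4))).sub
      (hsum.tendsto_atTop_zero.const_mul ((m : ℝ) + 2))
    rw [mul_zero, sub_zero] at this
    refine this.congr fun n => ?_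
    linear_combination (sum_range_c_recurrence m n).symm
  have hT := eq_zero_of_summable_of_tendsto_natCast_mul hsum hlim
  convert hsum.hasSum using 1
  rw [div_eq_iff (by positivity)]
  linarith

theorem hasSum_c_succ (l : ℕ) :
    HasSum (fun k => c (l + 1) k) (4 / (((l : ℝ) + 1) * ((l : ℝ) + 2) * ((l : ℝ) + 3))) := by
  induction l with
  | zero => norm_num [hasSum_c_one]
  | succ l ih =>
    convert hasSum_c_succ_succ ih using 1
    push_cast
    field_simp
    ring

theorem hasSum_four_div_mul_mul :
    HasSum (fun l : ℕ => 4 / (((l : ℝ) + 1) * ((l : ℝ) + 2) * ((l : ℝ) + 3))) 1 := by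
  set g : ℕ → ℝ := fun l => 2 / ((l : ℝ) + 1) - 2 / ((l : ℝ) + 2) with hg
  have hstep : ∀ l : ℕ, 4 / (((l : ℝ) + 1) * ((l : ℝ) + 2) * ((l : ℝ) + 3)) = g l - g (l + 1) := by
    intro l
    simp only [hg]
    push_cast
    field_simp
    ring
  have hlim : Tendsto g atTop (𝓝 0) := by
    simpa using (tendsto_const_div_natCast_add 2 1).sub (tendsto_const_div_natCast_add 2 2)
  convert hasSum_of_eq_sub_succ (fun l => by positivity) hstep hlim
  norm_num [hg]

/-- The double series `∑_{l=0}^∞ ∑_{k=0}^∞ c(l,k)` converges with sum `1`. -/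
theorem total_sum_c :
    (∀ l : ℕ, Summable (fun k : ℕ => c l k)) ∧
      HasSum (fun l : ℕ => ∑' k : ℕ, c l k) 1 := by
  refine ⟨fun l => ?_, ?_⟩
  · cases l with
    | zero => simp [c_zero_left]
    | succ l => exact (hasSum_c_succ l).summable
  · rw [← hasSum_nat_add_iff' 1]
    simpa [c_zero_left, (hasSum_c_succ _).tsum_eq] using hasSum_four_div_mul_mul
end
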